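/- arXiv:2008.06714 — 4 statements merged into one kernel-verified Lean document; each statement's English description precedes it below -/
import Mathlib

section
/- Let g₁, g₂ be vector spaces. If f, g are linear maps on the exterior algebra of g₁ ⊕ g₂ with bidegrees ||f|| = k_f|l_f and ||g|| = k_g|l_g, then the Nijenhuis-Richardson bracket [f,g]_NR has bidegree (k_f + k_g)|(l_f + l_g). -/
attribute [local instance] Classical.propDecidable

def IsShuffle {n : ℕ} (j : ℕ) (σ : Equiv.Perm (Fin n)) : Prop :=
  ∀ a b : Fin n, a < b → ((b : ℕ) < j ∨ j ≤ (a : ℕ)) → σ a < σ b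

noncomputable def nrCirc {W : Type*} [AddCommGroup W] (p q : ℕ)
    (P : (Fin (p+1) → W) → W) (Q : (Fin (q+1) → W) → W) :
    (Fin (p+q+1) → W) → W := fun v =>
  ∑ σ : Equiv.Perm (Fin (p+q+1)),
    if IsShuffle (q+1) σ then
      ((Equiv.Perm.sign σ : ℤˣ) : ℤ) •
        P (Fin.cons (Q fun i => v (σ (Fin.castLE (by omega) i)))
            (fun i => v (σ (Fin.cast (by omega) (Fin.natAdd (q+1) i)))))
    else 0

noncomputable def nrBracket {W : Type*} [AddCommGroup W] (p q : ℕ)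
    (P : (Fin (p+1) → W) → W) (Q : (Fin (q+1) → W) → W) :
    (Fin (p+q+1) → W) → W := fun v =>
  nrCirc p q P Q v - ((-1 : ℤ)^(p*q)) • nrCirc q p Q P (fun i => v (Fin.cast (by omega) i))

/-- A tuple of elements of `g₁ ⊕ g₂` is *pure* for a flag `a : Fin n → Bool` when the
entries flagged `true` lie in `g₁` and the entries flagged `false` lie in `g₂`. -/
def PureTuple {G1 G2 : Type*} [Zero G1] [Zero G2] {n : ℕ} (a : Fin n → Bool)
    (v : Fin n → G1 × G2) : Prop :=
  ∀ i, (a i = true → (v i).2 = 0) ∧ (a i = false → (v i).1 = 0)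

/-- A map `f ∈ Hom(Λ^{k+l+1}(g₁⊕g₂), g₁⊕g₂)` has bidegree `k|l`: on a tuple with
`k+1` entries from `g₁` and `l` from `g₂` it takes values in `g₁`; on a tuple with `k`
entries from `g₁` and `l+1` from `g₂` it takes values in `g₂`; in all other cases it
vanishes. -/
def HasBidegree {G1 G2 : Type*} [Zero G1] [Zero G2] (k l : ℤ) {n : ℕ}
    (f : (Fin n → G1 × G2) → G1 × G2) : Prop :=
  (n : ℤ) = k + l + 1 ∧
  ∀ (a : Fin n → Bool) (v : Fin n → G1 × G2), PureTuple a v →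
    ((((Finset.univ.filter fun i => a i = true).card : ℤ) = k + 1 → (f v).2 = 0) ∧
     (((Finset.univ.filter fun i => a i = true).card : ℤ) = k → (f v).1 = 0) ∧
     ((((Finset.univ.filter fun i => a i = true).card : ℤ) ≠ k + 1 ∧
       ((Finset.univ.filter fun i => a i = true).card : ℤ) ≠ k) → f v = 0))

open Finset in
lemma card_cons_flag {p : ℕ} (b : Bool) (ao : Fin p → Bool) :
    (univ.filter fun i : Fin (p+1) => (Fin.cons b ao : Fin (p+1) → Bool) i = true).card =
      (if b = true then 1 else 0) + (univ.filter fun i => ao i = true).card := by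
  rw [Finset.card_filter, Finset.card_filter, Fin.sum_univ_succ]
  simp

lemma pure_cons {G1 G2 : Type*} [AddCommGroup G1] [AddCommGroup G2] {p : ℕ}
    (b : Bool) (x : G1 × G2) (hx1 : b = true → x.2 = 0) (hx2 : b = false → x.1 = 0)
    (ao : Fin p → Bool) (vo : Fin p → G1 × G2) (hvo : PureTuple ao vo) :
    PureTuple (Fin.cons b ao) (Fin.cons x vo) := by
  intro i
  refine Fin.cases ?_ ?_ i
  · simpa using ⟨hx1, hx2⟩
  · intro j; simpa using hvo j

open Finset in
lemma apply_cons_zero {G1 G2 : Type*} [AddCommGroup G1] [AddCommGroup G2] {kf lf : ℤ} {p : ℕ}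
    {f : (Fin (p+1) → G1 × G2) → G1 × G2} (hf : HasBidegree kf lf f)
    (ao : Fin p → Bool) (vo : Fin p → G1 × G2) (hvo : PureTuple ao vo) :
    f (Fin.cons 0 vo) = 0 := by
  have ht := pure_cons true (0 : G1 × G2) (fun _ => rfl) (fun _ => rfl) ao vo hvo
  have hff := pure_cons false (0 : G1 × G2) (fun _ => rfl) (fun _ => rfl) ao vo hvo
  obtain ⟨t1, t2, t3⟩ := hf.2 _ _ ht
  obtain ⟨u1, u2, u3⟩ := hf.2 _ _ hff
  set c2 : ℤ := ((univ.filter fun i => ao i = true).card : ℤ) with hc2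
  have cardt : ((univ.filter fun i : Fin (p+1) => (Fin.cons true ao : Fin (p+1) → Bool) i = true).card : ℤ) = 1 + c2 := by
    rw [card_cons_flag]; push_cast; simp; rfl
  have cardf : ((univ.filter fun i : Fin (p+1) => (Fin.cons false ao : Fin (p+1) → Bool) i = true).card : ℤ) = c2 := by
    rw [card_cons_flag]; push_cast; simp; rfl
  by_cases hc : c2 = kf
  · rw [Prod.ext_iff]
    exact ⟨by simpa using u2 (by rw [cardf]; omega), by simpa using t1 (by rw [cardt]; omega)⟩
  by_cases hc' : c2 = kf + 1
  · exact t3 ⟨by rw [cardt]; omega, by rw [cardt]; omega⟩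
  · exact u3 ⟨by rw [cardf]; omega, by rw [cardf]; omega⟩

open Finset in
lemma term_prop {G1 G2 : Type*} [AddCommGroup G1] [AddCommGroup G2]
    {kf lf kg lg : ℤ} {p q : ℕ}
    {f : (Fin (p+1) → G1 × G2) → G1 × G2} {g : (Fin (q+1) → G1 × G2) → G1 × G2}
    (hf : HasBidegree kf lf f) (hg : HasBidegree kg lg g)
    (ai : Fin (q+1) → Bool) (vi : Fin (q+1) → G1 × G2) (hvi : PureTuple ai vi)
    (ao : Fin p → Bool) (vo : Fin p → G1 × G2) (hvo : PureTuple ao vo)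
    (c : ℤ)
    (hc : c = ((univ.filter fun i => ai i = true).card : ℤ)
            + ((univ.filter fun i => ao i = true).card : ℤ)) :
    (c = kf + kg + 1 → (f (Fin.cons (g vi) vo)).2 = 0) ∧
    (c = kf + kg → (f (Fin.cons (g vi) vo)).1 = 0) ∧
    ((c ≠ kf + kg + 1 ∧ c ≠ kf + kg) → f (Fin.cons (g vi) vo) = 0) := by
  set c1 : ℤ := ((univ.filter fun i => ai i = true).card : ℤ) with hc1
  set c2 : ℤ := ((univ.filter fun i => ao i = true).card : ℤ) with hc2
  obtain ⟨g1, g2, g3⟩ := hg.2 ai vi hvi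
  have cardt : ((univ.filter fun i : Fin (p+1) => (Fin.cons true ao : Fin (p+1) → Bool) i = true).card : ℤ) = 1 + c2 := by
    rw [card_cons_flag]; push_cast; simp; rfl
  have cardf : ((univ.filter fun i : Fin (p+1) => (Fin.cons false ao : Fin (p+1) → Bool) i = true).card : ℤ) = c2 := by
    rw [card_cons_flag]; push_cast; simp; rfl
  by_cases h1 : c1 = kg + 1
  · have hw := pure_cons true (g vi) (fun _ => g1 h1) (by simp) ao vo hvo
    obtain ⟨f1, f2, f3⟩ := hf.2 _ _ hw
    exact ⟨fun h => f1 (by rw [cardt]; omega), fun h => f2 (by rw [cardt]; omega),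
      fun h => f3 ⟨by rw [cardt]; omega, by rw [cardt]; omega⟩⟩
  by_cases h2 : c1 = kg
  · have hw := pure_cons false (g vi) (by simp) (fun _ => g2 h2) ao vo hvo
    obtain ⟨f1, f2, f3⟩ := hf.2 _ _ hw
    exact ⟨fun h => f1 (by rw [cardf]; omega), fun h => f2 (by rw [cardf]; omega),
      fun h => f3 ⟨by rw [cardf]; omega, by rw [cardf]; omega⟩⟩
  · have hz : g vi = 0 := g3 ⟨h1, h2⟩
    have hz' : f (Fin.cons (g vi) vo) = 0 := by
      rw [hz]; exact apply_cons_zero hf ao vo hvo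
    exact ⟨fun _ => by rw [hz']; rfl, fun _ => by rw [hz']; rfl, fun _ => hz'⟩

open Finset in
lemma count_split {p q : ℕ} (σ : Equiv.Perm (Fin (p+q+1))) (a : Fin (p+q+1) → Bool) :
    (univ.filter fun j => a j = true).card =
    (univ.filter fun i : Fin (q+1) => a (σ (Fin.castLE (by omega) i)) = true).card +
    (univ.filter fun i : Fin p =>
        a (σ (Fin.cast (by omega) (Fin.natAdd (q+1) i))) = true).card := by
  rw [Finset.card_filter, Finset.card_filter, Finset.card_filter]
  rw [← Equiv.sum_comp σ (fun j => if a j = true then 1 else 0)]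
  rw [← Equiv.sum_comp (finCongr (show q+1+p = p+q+1 by omega))
        (fun j => if a (σ j) = true then 1 else 0)]
  rw [Fin.sum_univ_add]
  rfl

open Finset in
lemma circ_prop {G1 G2 : Type*} [AddCommGroup G1] [AddCommGroup G2]
    {kf lf kg lg : ℤ} {p q : ℕ}
    {f : (Fin (p+1) → G1 × G2) → G1 × G2} {g : (Fin (q+1) → G1 × G2) → G1 × G2}
    (hf : HasBidegree kf lf f) (hg : HasBidegree kg lg g)
    (a : Fin (p+q+1) → Bool) (v : Fin (p+q+1) → G1 × G2) (hv : PureTuple a v) :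
    (((univ.filter fun i => a i = true).card : ℤ) = kf + kg + 1 →
        (nrCirc p q f g v).2 = 0) ∧
    (((univ.filter fun i => a i = true).card : ℤ) = kf + kg →
        (nrCirc p q f g v).1 = 0) ∧
    ((((univ.filter fun i => a i = true).card : ℤ) ≠ kf + kg + 1 ∧
      ((univ.filter fun i => a i = true).card : ℤ) ≠ kf + kg) →
        nrCirc p q f g v = 0) := by
  have key : ∀ σ : Equiv.Perm (Fin (p+q+1)),
      (((univ.filter fun i => a i = true).card : ℤ) = kf + kg + 1 →
        (f (Fin.cons (g fun i => v (σ (Fin.castLE (by omega) i)))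
            (fun i => v (σ (Fin.cast (by omega) (Fin.natAdd (q+1) i)))))).2 = 0) ∧
      (((univ.filter fun i => a i = true).card : ℤ) = kf + kg →
        (f (Fin.cons (g fun i => v (σ (Fin.castLE (by omega) i)))
            (fun i => v (σ (Fin.cast (by omega) (Fin.natAdd (q+1) i)))))).1 = 0) ∧
      ((((univ.filter fun i => a i = true).card : ℤ) ≠ kf + kg + 1 ∧
        ((univ.filter fun i => a i = true).card : ℤ) ≠ kf + kg) →
        f (Fin.cons (g fun i => v (σ (Fin.castLE (by omega) i)))
            (fun i => v (σ (Fin.cast (by omega) (Fin.natAdd (q+1) i)))))= 0) := by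
    intro σ
    exact term_prop hf hg _ _ (fun i => hv _) _ _ (fun i => hv _) _
      (by exact_mod_cast count_split σ a)
  refine ⟨fun h => ?_, fun h => ?_, fun h => ?_⟩
  · rw [nrCirc, Prod.snd_sum]
    refine Finset.sum_eq_zero fun σ _ => ?_
    by_cases hσ : IsShuffle (q+1) σ
    · rw [if_pos hσ, Prod.smul_snd, (key σ).1 h, smul_zero]
    · simp [hσ]
  · rw [nrCirc, Prod.fst_sum]
    refine Finset.sum_eq_zero fun σ _ => ?_
    by_cases hσ : IsShuffle (q+1) σ
    · rw [if_pos hσ, Prod.smul_fst, (key σ).2.1 h, smul_zero]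
    · simp [hσ]
  · rw [nrCirc]
    refine Finset.sum_eq_zero fun σ _ => ?_
    by_cases hσ : IsShuffle (q+1) σ
    · rw [if_pos hσ, (key σ).2.2 h, smul_zero]
    · rw [if_neg hσ]

open Finset in
lemma count_cast {p q : ℕ} (a : Fin (p+q+1) → Bool) :
    (univ.filter fun i : Fin (q+p+1) =>
        a (Fin.cast (show q+p+1 = p+q+1 by omega) i) = true).card =
    (univ.filter fun i => a i = true).card := by
  rw [Finset.card_filter, Finset.card_filter,
    ← Equiv.sum_comp (finCongr (show q+p+1 = p+q+1 by omega))
      (fun j => if a j = true then 1 else 0)]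
  rfl

/-- if `‖f‖ = k_f|l_f` and `‖g‖ = k_g|l_g` then
`‖[f,g]_NR‖ = (k_f+k_g)|(l_f+l_g)`. -/
theorem stmt1 {G1 G2 : Type*} [AddCommGroup G1] [AddCommGroup G2]
    (kf lf kg lg : ℤ) (p q : ℕ)
    (f : (Fin (p+1) → G1 × G2) → G1 × G2) (g : (Fin (q+1) → G1 × G2) → G1 × G2)
    (hf : HasBidegree kf lf f) (hg : HasBidegree kg lg g) :
    HasBidegree (kf + kg) (lf + lg) (nrBracket p q f g) := by
  constructor
  · have h1 := hf.1; have h2 := hg.1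
    push_cast at h1 h2 ⊢; omega
  · intro a v hv
    have T1 := circ_prop hf hg a v hv
    have T2 := circ_prop hg hf
      (fun i => a (Fin.cast (show q+p+1 = p+q+1 by omega) i))
      (fun i => v (Fin.cast (show q+p+1 = p+q+1 by omega) i)) (fun i => hv _)
    have hcc : ((Finset.univ.filter fun i : Fin (q+p+1) =>
          a (Fin.cast (show q+p+1 = p+q+1 by omega) i) = true).card : ℤ) =
        ((Finset.univ.filter fun i => a i = true).card : ℤ) := by
      exact_mod_cast count_cast a
    refine ⟨fun h => ?_, fun h => ?_, fun h => ?_⟩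
    · rw [nrBracket, Prod.snd_sub, Prod.smul_snd, T1.1 h, T2.1 (by rw [hcc]; omega),
        smul_zero, sub_zero]
    · rw [nrBracket, Prod.fst_sub, Prod.smul_fst, T1.2.1 h, T2.2.1 (by rw [hcc]; omega),
        smul_zero, sub_zero]
    · rw [nrBracket, T1.2.2 h,
        T2.2.2 ⟨by rw [hcc]; omega, by rw [hcc]; omega⟩, smul_zero, sub_zero]
end

section
/- Let g and V be vector spaces, μ ∈ Hom(Λ²g, g) and ρ ∈ Hom(g ⊗ V, V). Then μ is a Lie bracket on g and ρ is a representation of (g, μ) on V if and only if [μ+ρ, μ+ρ]_NR = 0, where μ+ρ is regarded as an element of C¹(g⊕V, g⊕V) via the lift construction. -/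
attribute [local instance] Classical.propDecidable

/-- The lift `μ̂ + ρ̂ ∈ C¹(g⊕V, g⊕V)` of `μ ∈ Hom(Λ²g,g)` and `ρ ∈ Hom(g⊗V,V)`:
`(μ+ρ)((x₁,v₁),(x₂,v₂)) = (μ(x₁,x₂), ρ(x₁)v₂ − ρ(x₂)v₁)`. -/
def pihat {K g V : Type*} [Field K] [AddCommGroup g] [Module K g]
    [AddCommGroup V] [Module K V]
    (μ : g →ₗ[K] g →ₗ[K] g) (ρ : g →ₗ[K] Module.End K V) :
    (Fin 2 → g × V) → g × V := fun w =>
  (μ (w 0).1 (w 1).1, ρ (w 0).1 (w 1).2 - ρ (w 1).1 (w 0).2)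

open Equiv

lemma term_eq {W : Type*} [AddCommGroup W] (P Q : (Fin 2 → W) → W) (v : Fin 3 → W)
    (σ : Perm (Fin 3)) :
    P (Fin.cons (Q fun i => v (σ (Fin.castLE (by omega) i)))
        (fun i => v (σ (Fin.cast (by omega) (Fin.natAdd 2 i)))))
      = P ![Q ![v (σ 0), v (σ 1)], v (σ 2)] := by
  congr 1
  funext i
  fin_cases i
  · simp only [Fin.cons_zero, Matrix.cons_val_zero]
    refine congrArg Q (funext fun j => ?_)
    fin_cases j <;> rfl
  · rfl

lemma nrCirc_11 {W : Type*} [AddCommGroup W] (P Q : (Fin 2 → W) → W) (v : Fin 3 → W) :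
    nrCirc 1 1 P Q v
      = P ![Q ![v 0, v 1], v 2] - P ![Q ![v 0, v 2], v 1] + P ![Q ![v 1, v 2], v 0] := by
  show (∑ σ : Perm (Fin 3), if IsShuffle 2 σ then
      ((Equiv.Perm.sign σ : ℤˣ) : ℤ) •
        P (Fin.cons (Q fun i => v (σ (Fin.castLE (by omega) i)))
            (fun i => v (σ (Fin.cast (by omega) (Fin.natAdd 2 i))))) else 0) = _
  rw [show (Finset.univ : Finset (Perm (Fin 3))) =
      {1, swap 0 1, swap 0 2, swap 1 2, swap 0 1 * swap 0 2, swap 0 2 * swap 0 1} from by decide]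
  rw [Finset.sum_insert (by decide), Finset.sum_insert (by decide),
    Finset.sum_insert (by decide), Finset.sum_insert (by decide),
    Finset.sum_insert (by decide), Finset.sum_singleton]
  rw [if_pos (show IsShuffle 2 1 from by unfold IsShuffle; decide),
    if_neg (show ¬ IsShuffle 2 (swap 0 1) from by unfold IsShuffle; decide),
    if_neg (show ¬ IsShuffle 2 (swap 0 2) from by unfold IsShuffle; decide),
    if_pos (show IsShuffle 2 (swap 1 2) from by unfold IsShuffle; decide),
    if_neg (show ¬ IsShuffle 2 (swap 0 1 * swap 0 2) from by unfold IsShuffle; decide),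
    if_pos (show IsShuffle 2 (swap 0 2 * swap 0 1) from by unfold IsShuffle; decide)]
  rw [term_eq P Q v 1, term_eq P Q v (swap 1 2), term_eq P Q v (swap 0 2 * swap 0 1)]
  rw [show ((Equiv.Perm.sign (1 : Perm (Fin 3)) : ℤˣ) : ℤ) = 1 from by decide,
    show ((Equiv.Perm.sign (swap 1 2 : Perm (Fin 3)) : ℤˣ) : ℤ) = -1 from by decide,
    show ((Equiv.Perm.sign (swap 0 2 * swap 0 1 : Perm (Fin 3)) : ℤˣ) : ℤ) = 1 from by decide]
  rw [show ((1 : Perm (Fin 3)) 0) = 0 from rfl, show ((1 : Perm (Fin 3)) 1) = 1 from rfl,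
    show ((1 : Perm (Fin 3)) 2) = 2 from rfl,
    show ((swap 1 2 : Perm (Fin 3)) 0) = 0 from by decide,
    show ((swap 1 2 : Perm (Fin 3)) 1) = 2 from by decide,
    show ((swap 1 2 : Perm (Fin 3)) 2) = 1 from by decide,
    show ((swap 0 2 * swap 0 1 : Perm (Fin 3)) 0) = 1 from by decide,
    show ((swap 0 2 * swap 0 1 : Perm (Fin 3)) 1) = 2 from by decide,
    show ((swap 0 2 * swap 0 1 : Perm (Fin 3)) 2) = 0 from by decide]
  simp
  abel

lemma nrBracket_11 {W : Type*} [AddCommGroup W] (P : (Fin 2 → W) → W) (v : Fin 3 → W) :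
    nrBracket 1 1 P P v
      = (P ![P ![v 0, v 1], v 2] - P ![P ![v 0, v 2], v 1] + P ![P ![v 1, v 2], v 0])
      + (P ![P ![v 0, v 1], v 2] - P ![P ![v 0, v 2], v 1] + P ![P ![v 1, v 2], v 0]) := by
  show nrCirc 1 1 P P v - ((-1 : ℤ)^(1*1)) • nrCirc 1 1 P P (fun i => v (Fin.cast (by omega) i)) = _
  have h2 : nrCirc 1 1 P P (fun i => v (Fin.cast (by omega : 1+1+1 = 1+1+1) i))
      = nrCirc 1 1 P P v := rfl
  rw [h2, nrCirc_11]
  simp [sub_eq_add_neg]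
  abel

lemma pihat_apply {K g V : Type*} [Field K] [AddCommGroup g] [Module K g]
    [AddCommGroup V] [Module K V]
    (μ : g →ₗ[K] g →ₗ[K] g) (ρ : g →ₗ[K] Module.End K V) (a b : g × V) :
    pihat μ ρ ![a, b] = (μ a.1 b.1, ρ a.1 b.2 - ρ b.1 a.2) := rfl

/-- `μ` is a Lie bracket on `g` and `ρ` a representation of `(g,μ)` on `V`
iff `[μ+ρ, μ+ρ]_NR = 0` in `C*(g⊕V, g⊕V)`. -/
theorem stmt3 {K g V : Type*} [Field K] [CharZero K] [AddCommGroup g] [Module K g]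
    [AddCommGroup V] [Module K V]
    (μ : g →ₗ[K] g →ₗ[K] g) (hskew : ∀ x y, μ x y = - μ y x)
    (ρ : g →ₗ[K] Module.End K V) :
    ((∀ x y z, μ (μ x y) z + μ (μ y z) x + μ (μ z x) y = 0) ∧
      (∀ x y, ρ (μ x y) = ρ x * ρ y - ρ y * ρ x)) ↔
    nrBracket 1 1 (pihat μ ρ) (pihat μ ρ) = 0 := by
  set P := pihat μ ρ with hP
  have key : ∀ v : Fin 3 → g × V,
      nrBracket 1 1 P P v
        = (P ![P ![v 0, v 1], v 2] - P ![P ![v 0, v 2], v 1] + P ![P ![v 1, v 2], v 0])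
        + (P ![P ![v 0, v 1], v 2] - P ![P ![v 0, v 2], v 1] + P ![P ![v 1, v 2], v 0]) :=
    nrBracket_11 P
  constructor
  · rintro ⟨hJ, hR⟩
    funext v
    simp only [Pi.zero_apply]
    rw [key v]
    have hz : P ![P ![v 0, v 1], v 2] - P ![P ![v 0, v 2], v 1] + P ![P ![v 1, v 2], v 0] = 0 := by
      rw [hP]
      simp only [pihat_apply]
      refine Prod.ext ?_ ?_
      · simp only [Prod.fst_add, Prod.fst_sub, Prod.fst_zero]
        have h1 : μ (μ (v 0).1 (v 2).1) (v 1).1 = - μ (μ (v 2).1 (v 0).1) (v 1).1 := by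
          rw [hskew (v 0).1 (v 2).1]; simp
        rw [h1, sub_neg_eq_add]
        have h2 := hJ (v 0).1 (v 1).1 (v 2).1
        rw [show μ (μ (v 0).1 (v 1).1) (v 2).1 + μ (μ (v 2).1 (v 0).1) (v 1).1
              + μ (μ (v 1).1 (v 2).1) (v 0).1
            = μ (μ (v 0).1 (v 1).1) (v 2).1 + μ (μ (v 1).1 (v 2).1) (v 0).1
              + μ (μ (v 2).1 (v 0).1) (v 1).1 from by abel]
        exact h2
      · simp only [Prod.snd_add, Prod.snd_sub, Prod.snd_zero]
        simp only [hR, map_sub, LinearMap.sub_apply, Module.End.mul_apply]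
        abel
    rw [hz, add_zero]
  · intro H
    have key0 : ∀ v : Fin 3 → g × V,
        P ![P ![v 0, v 1], v 2] - P ![P ![v 0, v 2], v 1] + P ![P ![v 1, v 2], v 0] = 0 := by
      intro v
      set E := P ![P ![v 0, v 1], v 2] - P ![P ![v 0, v 2], v 1] + P ![P ![v 1, v 2], v 0] with hE
      have hv : E + E = 0 := by rw [hE, ← key v, H]; rfl
      have h2 : (2 : K) • E = 0 := by rw [two_smul]; exact hv
      have := smul_eq_zero.mp h2
      rcases this with h3 | h3
      · exact absurd h3 two_ne_zero
      · exact h3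
    constructor
    · intro x y z
      have h := key0 ![(x, 0), (y, 0), (z, 0)]
      have h1 := congrArg Prod.fst h
      simp only [hP, pihat_apply, Matrix.cons_val_zero, Matrix.cons_val_one, Matrix.head_cons,
        Prod.fst_add, Prod.fst_sub, Prod.fst_zero] at h1
      have h2 : μ (μ z x) y = - μ (μ x z) y := by rw [hskew z x]; simp
      rw [h2]
      rw [show μ (μ x y) z + μ (μ y z) x + -μ (μ x z) y
          = μ (μ x y) z - μ (μ x z) y + μ (μ y z) x from by abel]
      exact h1
    · intro x y
      ext u
      have h := key0 ![(x, 0), (y, 0), ((0 : g), u)]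
      have h1 := congrArg Prod.snd h
      simp only [hP, pihat_apply, Matrix.cons_val_zero, Matrix.cons_val_one, Matrix.head_cons,
        Prod.snd_add, Prod.snd_sub, Prod.snd_zero, map_zero, LinearMap.zero_apply,
        LinearMap.map_zero, sub_zero, zero_sub, Matrix.cons_val_two, Matrix.tail_cons] at h1
      simp only [LinearMap.sub_apply, Module.End.mul_apply]
      linear_combination (norm := abel) h1
end

section
/- Let ((g,μ),ρ,T) be a relative Rota-Baxter Lie algebra. Define h_T : Hom(Λⁿg,g)⊕Hom(Λ^{n−1}g⊗V,V) → Hom(ΛⁿV,g) by h_T f := (−1)^{n−2}(1/n!)[⋯[[f,T]_NR,T]_NR,⋯,T]_NR (n iterated brackets). Then for f = (f_g, f_V), (h_T f)(v₁,…,vₙ) = (−1)ⁿ f_g(Tv₁,…,Tvₙ) + Σ_{i=1}^{n} (−1)^{i+1} T f_V(Tv₁,…,Tv_{i−1},Tv_{i+1},…,Tvₙ, v_i). -/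
attribute [local instance] Classical.propDecidable

def hatT {K g V : Type*} [Field K] [AddCommGroup g] [Module K g]
    [AddCommGroup V] [Module K V] (T : V →ₗ[K] g) :
    (Fin 1 → g × V) → g × V := fun w => (T ((w 0).2), 0)

/-- The lift of `θ ∈ Hom(Λᵏ V, g)` to `C^{k-1}(g⊕V, g⊕V)`. -/
def liftB {K g V : Type*} [Field K] [AddCommGroup g] [Module K g]
    [AddCommGroup V] [Module K V] {k : ℕ}
    (θ : AlternatingMap K V g (Fin k)) : (Fin k → g × V) → g × V :=
  fun v => (θ (fun i => (v i).2), 0)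


def IsMultiAlt (K : Type*) {W U : Type*} [Field K] [AddCommGroup W] [Module K W]
    [AddCommGroup U] [Module K U] {n : ℕ} (f : (Fin n → W) → U) : Prop :=
  (∀ (v : Fin n → W) (i : Fin n) (a b : W),
      f (Function.update v i (a + b)) = f (Function.update v i a) + f (Function.update v i b)) ∧
  (∀ (v : Fin n → W) (i : Fin n) (c : K) (a : W),
      f (Function.update v i (c • a)) = c • f (Function.update v i a)) ∧
  (∀ v : Fin n → W, ∀ i j, i ≠ j → v i = v j → f v = 0)

/-- The lift to `C^m(g⊕V, g⊕V)` of a pair `(f_g, f_V)` with `f_g ∈ Hom(Λ^{m+1}g, g)`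
and `f_V ∈ Hom(Λ^m g ⊗ V, V)`. -/
noncomputable def liftPair (K : Type*) {g V : Type*} [Field K] [AddCommGroup g] [Module K g]
    [AddCommGroup V] [Module K V] (m : ℕ)
    (fg : (Fin (m+1) → g) → g) (fV : (Fin m → g) → V → V) :
    (Fin (m+1) → g × V) → g × V := fun w =>
  (fg (fun i => (w i).1),
   ∑ σ : Equiv.Perm (Fin (m+1)),
     if IsShuffle m σ then
       ((Equiv.Perm.sign σ : ℤˣ) : ℤ) •
         fV (fun j => (w (σ (Fin.castLE (by omega) j))).1) ((w (σ (Fin.last m))).2)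
     else 0)

section PermInfra

open Equiv Fin

/-- The unique permutation sending `0 ↦ j` and increasing elsewhere. -/
def fP {n : ℕ} (j : Fin (n+1)) : Equiv.Perm (Fin (n+1)) := (Fin.cycleRange j)⁻¹

@[simp] lemma fP_zero {n : ℕ} (j : Fin (n+1)) : fP j 0 = j := by
  apply (Fin.cycleRange j).injective
  simp [fP, Equiv.Perm.inv_def, Equiv.apply_symm_apply, Fin.cycleRange_self]

@[simp] lemma fP_succ {n : ℕ} (j : Fin (n+1)) (i : Fin n) :
    fP j i.succ = j.succAbove i := by
  apply (Fin.cycleRange j).injective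
  simp [fP, Equiv.Perm.inv_def, Equiv.apply_symm_apply, Fin.cycleRange_succAbove]

lemma sign_fP {n : ℕ} (j : Fin (n+1)) :
    Equiv.Perm.sign (fP j) = (-1 : ℤˣ) ^ (j : ℕ) := by
  simp [fP, Fin.sign_cycleRange, inv_pow]

lemma fP_injective {n : ℕ} : Function.Injective (fP (n := n)) := by
  intro a b h
  have := congrArg (fun σ : Equiv.Perm (Fin (n+1)) => σ 0) h
  simpa using this

/-- The unique permutation sending `last ↦ j` and increasing elsewhere. -/
def bP {n : ℕ} (j : Fin (n+1)) : Equiv.Perm (Fin (n+1)) := fP j * finRotate (n+1)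

@[simp] lemma bP_last {n : ℕ} (j : Fin (n+1)) : bP j (Fin.last n) = j := by
  simp [bP, Equiv.Perm.mul_apply, finRotate_last]

@[simp] lemma bP_castSucc {n : ℕ} (j : Fin (n+1)) (i : Fin n) :
    bP j i.castSucc = j.succAbove i := by
  have h : finRotate (n+1) i.castSucc = i.succ := by
    rw [finRotate_succ_apply]
    ext
    rw [Fin.val_add_one_of_lt (Fin.castSucc_lt_last i)]
    simp
  simp [bP, Equiv.Perm.mul_apply, h]

lemma sign_bP {n : ℕ} (j : Fin (n+1)) :
    Equiv.Perm.sign (bP j) = (-1 : ℤˣ) ^ ((j : ℕ) + n) := by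
  simp [bP, sign_fP, sign_finRotate, pow_add]

lemma bP_injective {n : ℕ} : Function.Injective (bP (n := n)) := by
  intro a b h
  have := congrArg (fun σ : Equiv.Perm (Fin (n+1)) => σ (Fin.last n)) h
  simpa using this

lemma range_succ_comp {n : ℕ} (σ : Equiv.Perm (Fin (n+1))) :
    Set.range (fun i : Fin n => σ i.succ) = {σ 0}ᶜ := by
  ext y
  constructor
  · rintro ⟨i, rfl⟩
    simp only [Set.mem_compl_iff, Set.mem_singleton_iff]
    intro h
    exact (Fin.succ_ne_zero i) (σ.injective h)
  · intro hy
    have hx : σ.symm y ≠ 0 := by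
      intro h
      apply hy
      simp only [Set.mem_singleton_iff]
      rw [← σ.apply_symm_apply y, h]
    exact ⟨(σ.symm y).pred hx, by simp⟩

lemma range_castSucc_comp {n : ℕ} (σ : Equiv.Perm (Fin (n+1))) :
    Set.range (fun i : Fin n => σ i.castSucc) = {σ (Fin.last n)}ᶜ := by
  ext y
  constructor
  · rintro ⟨i, rfl⟩
    simp only [Set.mem_compl_iff, Set.mem_singleton_iff]
    intro h
    exact (Fin.ne_last_of_lt (Fin.castSucc_lt_last i)) (σ.injective h)
  · intro hy
    have hx : σ.symm y ≠ Fin.last n := by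
      intro h
      apply hy
      simp only [Set.mem_singleton_iff]
      rw [← σ.apply_symm_apply y, h]
    exact ⟨(σ.symm y).castPred hx, by simp⟩

lemma isShuffle_one_iff {n : ℕ} (σ : Equiv.Perm (Fin (n+1))) :
    IsShuffle 1 σ ↔ ∃ j, σ = fP j := by
  constructor
  · intro h
    refine ⟨σ 0, ?_⟩
    have hmono : StrictMono (fun i : Fin n => σ i.succ) := by
      intro a b hab
      exact h a.succ b.succ (Fin.succ_lt_succ_iff.mpr hab)
        (Or.inr (by simp [Fin.val_succ]))
    have hmono' : StrictMono ((σ 0).succAbove) := Fin.strictMono_succAbove _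
    have hr : Set.range (fun i : Fin n => σ i.succ) = Set.range ((σ 0).succAbove) := by
      rw [range_succ_comp, Fin.range_succAbove]
    have := (hmono.range_inj hmono').mp hr
    ext x
    induction x using Fin.cases with
    | zero => simp
    | succ i => rw [fP_succ, ← congrFun this i]
  · rintro ⟨j, rfl⟩
    intro a b hab hcond
    rcases hcond with h1 | h1
    · omega
    · have ha : a ≠ 0 := by
        intro h; rw [h] at h1; simp at h1
      have hb : b ≠ 0 := by
        intro h; rw [h] at hab; exact absurd hab (Fin.not_lt_zero _)
      obtain ⟨a', rfl⟩ := Fin.exists_succ_eq.mpr ha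
      obtain ⟨b', rfl⟩ := Fin.exists_succ_eq.mpr hb
      rw [fP_succ, fP_succ]
      exact Fin.strictMono_succAbove j (Fin.succ_lt_succ_iff.mp hab)

lemma isShuffle_back_iff {n : ℕ} (σ : Equiv.Perm (Fin (n+1))) :
    IsShuffle n σ ↔ ∃ j, σ = bP j := by
  constructor
  · intro h
    refine ⟨σ (Fin.last n), ?_⟩
    have hmono : StrictMono (fun i : Fin n => σ i.castSucc) := by
      intro a b hab
      exact h a.castSucc b.castSucc (Fin.castSucc_lt_castSucc_iff.mpr hab)
        (Or.inl (by simpa using hab.trans_le (Fin.le_last b)))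
    have hmono' : StrictMono ((σ (Fin.last n)).succAbove) := Fin.strictMono_succAbove _
    have hr : Set.range (fun i : Fin n => σ i.castSucc)
        = Set.range ((σ (Fin.last n)).succAbove) := by
      rw [range_castSucc_comp, Fin.range_succAbove]
    have := (hmono.range_inj hmono').mp hr
    ext x
    induction x using Fin.lastCases with
    | last => simp
    | cast i => rw [bP_castSucc, ← congrFun this i]
  · rintro ⟨j, rfl⟩
    intro a b hab hcond
    have hb : b ≠ Fin.last n ∨ n ≤ (a : ℕ) := by
      rcases hcond with h1 | h1
      · exact Or.inl (by intro hh; rw [hh] at h1; simp at h1)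
      · exact Or.inr h1
    rcases hb with hb | hb
    · have ha : a ≠ Fin.last n := Fin.ne_last_of_lt hab
      obtain ⟨a', rfl⟩ : ∃ a', a = a'.castSucc := ⟨a.castPred ha, by simp⟩
      obtain ⟨b', rfl⟩ : ∃ b', b = b'.castSucc := ⟨b.castPred hb, by simp⟩
      rw [bP_castSucc, bP_castSucc]
      exact Fin.strictMono_succAbove j (Fin.castSucc_lt_castSucc_iff.mp hab)
    · have : a = Fin.last n := Fin.ext (le_antisymm (Fin.le_last a) hb)
      rw [this] at hab
      exact absurd hab (Fin.not_lt.mpr (Fin.le_last b))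

lemma isShuffle_all_iff {N n' : ℕ} (hn : ∀ b : Fin N, (b : ℕ) < n')
    (σ : Equiv.Perm (Fin N)) : IsShuffle n' σ ↔ σ = 1 := by
  constructor
  · intro h
    have hmono : StrictMono σ := fun a b hab => h a b hab (Or.inl (hn b))
    have : (σ : Fin N → Fin N) = id := by
      refine (hmono.range_inj strictMono_id).mp ?_
      simp [Set.range_id, Equiv.range_eq_univ]
    exact Equiv.ext fun x => congrFun this x
  · rintro rfl
    intro a b hab _
    exact hab

lemma sum_shuffle_eq {M : Type*} [AddCommMonoid M] {n N : ℕ}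
    (p : Equiv.Perm (Fin n) → Prop) (e : Fin N → Equiv.Perm (Fin n))
    (hiff : ∀ σ, p σ ↔ ∃ j, σ = e j) (hinj : Function.Injective e)
    (f : Equiv.Perm (Fin n) → M) :
    (∑ σ : Equiv.Perm (Fin n), if p σ then f σ else 0) = ∑ j : Fin N, f (e j) := by
  rw [← Finset.sum_filter]
  have himg : Finset.univ.filter p = Finset.univ.image e := by
    ext σ
    simp only [Finset.mem_filter, Finset.mem_image, Finset.mem_univ, true_and, hiff]
    constructor
    · rintro ⟨j, rfl⟩; exact ⟨j, rfl⟩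
    · rintro ⟨j, rfl⟩; exact ⟨j, rfl⟩
  rw [himg, Finset.sum_image (fun a _ b _ h => hinj h)]

end PermInfra


section UpdateBridge

lemma updc {n : ℕ} {β : Type*} (inst : DecidableEq (Fin n)) (f : Fin n → β) (a : Fin n) (v : β) :
    @Function.update (Fin n) (fun _ => β) inst f a v
      = @Function.update (Fin n) (fun _ => β) (instDecidableEqFin n) f a v := by
  have h : inst = instDecidableEqFin n := by
    funext x y
    exact Subsingleton.elim _ _
  rw [h]

end UpdateBridge

section Main

variable {K g V : Type*} [Field K] [AddCommGroup g] [Module K g]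
  [AddCommGroup V] [Module K V]
  (T : V →ₗ[K] g) (m : ℕ) (fg : (Fin (m+1) → g) → g) (fV : (Fin m → g) → V → V)

/-- Evaluation of the Nijenhuis–Richardson bracket with `hatT`. -/
lemma bracket_eval (F : (Fin (m+1) → g × V) → g × V) (w : Fin (m+1) → g × V) :
    nrBracket m 0 F (hatT T) w
      = (∑ j : Fin (m+1), ((-1 : ℤ)^(j : ℕ)) •
          F (Fin.cons (T ((w j).2), 0) (w ∘ (Fin.succAbove j))))
        - (T ((F w).2), 0) := by
  have h1 : nrCirc m 0 F (hatT T) w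
      = ∑ j : Fin (m+1), ((-1 : ℤ)^(j : ℕ)) •
          F (Fin.cons (T ((w j).2), 0) (w ∘ (Fin.succAbove j))) := by
    show (∑ σ : Equiv.Perm (Fin (m+1)), if IsShuffle 1 σ then _ else 0) = _
    rw [sum_shuffle_eq (IsShuffle 1) fP (fun σ => isShuffle_one_iff σ) fP_injective]
    refine Finset.sum_congr rfl fun j _ => ?_
    have hsign : ((Equiv.Perm.sign (fP j) : ℤˣ) : ℤ) = (-1 : ℤ)^(j : ℕ) := by
      rw [sign_fP]; simp
    rw [hsign]
    congr 1
    have hhead : (hatT T fun i : Fin 1 => w (fP j (Fin.castLE (by omega) i)))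
        = (T ((w j).2), 0) := by
      show (T ((w (fP j (Fin.castLE (by omega) (0 : Fin 1)))).2), 0) = _
      have : (Fin.castLE (by omega) (0 : Fin 1) : Fin (m+1)) = 0 := rfl
      rw [this, fP_zero]
    have htail : (fun i : Fin m => w (fP j (Fin.cast (by omega) (Fin.natAdd 1 i))))
        = w ∘ (Fin.succAbove j) := by
      funext i
      have : (Fin.cast (by omega : 0+1+m = m+1) (Fin.natAdd 1 i)) = i.succ := by
        ext; simp [Nat.add_comm]
      rw [this, fP_succ]
      rfl
    rw [hhead, htail]
  have h2 : nrCirc 0 m (hatT T) F (fun i => w (Fin.cast (by omega) i))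
      = (T ((F w).2), 0) := by
    show (∑ σ : Equiv.Perm (Fin (0+m+1)), if IsShuffle (m+1) σ then _ else 0) = _
    rw [sum_shuffle_eq (N := 1) (IsShuffle (m+1)) (fun _ => 1)
      (fun σ => by
        rw [isShuffle_all_iff (fun b => by omega)]
        exact ⟨fun h => ⟨0, h⟩, fun ⟨_, h⟩ => h⟩)
      (fun a b _ => Subsingleton.elim a b)]
    rw [Fin.sum_univ_one]
    have hsign : ((Equiv.Perm.sign (1 : Equiv.Perm (Fin (0+m+1))) : ℤˣ) : ℤ) = 1 := by simp
    rw [hsign, one_smul]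
    simp only [Equiv.Perm.one_apply]
    have harg : (fun i : Fin (m+1) =>
        w (Fin.cast (by omega : 0+m+1 = m+1) (Fin.castLE (by omega) i))) = w := by
      funext i
      exact congrArg w (Fin.ext (by simp))
    rw [harg]
    rfl
  show nrCirc m 0 F (hatT T) w - ((-1 : ℤ)^(m*0)) • nrCirc 0 m (hatT T) F _ = _
  rw [h1, h2, Nat.mul_zero, pow_zero, one_smul]

end Main

section Halt

variable {K g V : Type*} [Field K] [AddCommGroup g] [Module K g]
  [AddCommGroup V] [Module K V]
  (m : ℕ) (fg : (Fin (m+1) → g) → g) (fV : (Fin m → g) → V → V)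

/-- The lifted pair bundled as an alternating map. -/
noncomputable def F0M (halt : IsMultiAlt K (liftPair K m fg fV)) :
    AlternatingMap K (g × V) (g × V) (Fin (m+1)) where
  toFun := liftPair K m fg fV
  map_update_add' := by
    intro inst v i a b
    rw [updc inst, updc inst, updc inst]
    exact halt.1 v i a b
  map_update_smul' := by
    intro inst v i c a
    rw [updc inst, updc inst]
    exact halt.2.1 v i c a
  map_eq_zero_of_eq' := fun v i j h hne => halt.2.2 v i j hne h

lemma F0M_apply (halt : IsMultiAlt K (liftPair K m fg fV)) (w : Fin (m+1) → g × V) :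
    F0M m fg fV halt w = liftPair K m fg fV w := rfl

lemma F0_zero (halt : IsMultiAlt K (liftPair K m fg fV)) {w : Fin (m+1) → g × V}
    (i : Fin (m+1)) (h : w i = 0) : liftPair K m fg fV w = 0 := by
  rw [← F0M_apply m fg fV halt]
  exact (F0M m fg fV halt).map_coord_zero i h

lemma F0_perm (halt : IsMultiAlt K (liftPair K m fg fV)) (w : Fin (m+1) → g × V)
    (σ : Equiv.Perm (Fin (m+1))) :
    liftPair K m fg fV (w ∘ σ)
      = ((Equiv.Perm.sign σ : ℤˣ) : ℤ) • liftPair K m fg fV w := by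
  have h := AlternatingMap.map_perm (F0M m fg fV halt) w σ
  rw [F0M_apply, F0M_apply, Units.smul_def] at h
  exact h

lemma F0_snd (w : Fin (m+1) → g × V) :
    (liftPair K m fg fV w).2
      = ∑ j : Fin (m+1), ((-1 : ℤ)^((j : ℕ) + m)) •
          fV (fun l => (w (j.succAbove l)).1) ((w j).2) := by
  show (∑ σ : Equiv.Perm (Fin (m+1)), if IsShuffle m σ then _ else 0) = _
  rw [sum_shuffle_eq (IsShuffle m) bP (fun σ => isShuffle_back_iff σ) bP_injective]
  refine Finset.sum_congr rfl fun j _ => ?_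
  have hsign : ((Equiv.Perm.sign (bP j) : ℤˣ) : ℤ) = (-1 : ℤ)^((j : ℕ) + m) := by
    rw [sign_bP]; simp
  rw [hsign]
  congr 1
  have harg : (fun l : Fin m => (w (bP j (Fin.castLE (by omega) l))).1)
      = fun l => (w (j.succAbove l)).1 := by
    funext l
    have hcast : (Fin.castLE (by omega : m ≤ m+1) l) = l.castSucc := rfl
    rw [hcast, bP_castSucc]
  rw [harg, bP_last]

lemma F0_snd_inl (y : Fin (m+1) → g) :
    (liftPair K m fg fV (fun i => (y i, 0))).2
      = ∑ j : Fin (m+1), ((-1 : ℤ)^((j : ℕ) + m)) • fV (fun l => y (j.succAbove l)) 0 :=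
  F0_snd m fg fV _

lemma neg_one_pow_sum {a b : ℕ} (h : (a + b) % 2 = 1) : ((-1 : ℤ)^a + (-1 : ℤ)^b) = 0 := by
  rcases Nat.even_or_odd a with ha | ha
  · have hb : Odd b := by
      rw [Nat.odd_iff]
      rw [Nat.even_iff] at ha
      omega
    rw [Even.neg_one_pow ha, Odd.neg_one_pow hb]; ring
  · have hb : Even b := by
      rw [Nat.even_iff]
      rw [Nat.odd_iff] at ha
      omega
    rw [Odd.neg_one_pow ha, Even.neg_one_pow hb]; ring

lemma succAbove_comp_range {n : ℕ} (c : Fin (n+2)) (j : Fin (n+1)) :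
    Set.range (fun l : Fin n => c.succAbove (j.succAbove l))
      = ({c, c.succAbove j} : Set (Fin (n+2)))ᶜ := by
  ext y
  simp only [Set.mem_range, Set.mem_compl_iff, Set.mem_insert_iff, Set.mem_singleton_iff]
  constructor
  · rintro ⟨l, rfl⟩
    push_neg
    constructor
    · exact Fin.succAbove_ne c _
    · intro h
      exact Fin.succAbove_ne j l ((Fin.succAbove_right_injective (p := c)) h)
  · intro hy
    push_neg at hy
    obtain ⟨z, hz⟩ := Fin.exists_succAbove_eq hy.1
    have hzj : z ≠ j := by
      intro h; rw [h] at hz; exact hy.2 hz.symm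
    obtain ⟨l, hl⟩ := Fin.exists_succAbove_eq hzj
    exact ⟨l, by rw [hl, hz]⟩

lemma succAbove_comp_eq {n : ℕ} (c c' : Fin (n+2)) (j j' : Fin (n+1))
    (hset : ({c, c.succAbove j} : Set (Fin (n+2))) = {c', c'.succAbove j'}) :
    (fun l : Fin n => c.succAbove (j.succAbove l))
      = fun l => c'.succAbove (j'.succAbove l) := by
  refine (StrictMono.range_inj ?_ ?_).mp ?_
  · exact fun a b hab => Fin.strictMono_succAbove c (Fin.strictMono_succAbove j hab)
  · exact fun a b hab => Fin.strictMono_succAbove c' (Fin.strictMono_succAbove j' hab)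
  · rw [succAbove_comp_range, succAbove_comp_range, hset]

lemma phi_zero (halt : IsMultiAlt K (liftPair K m fg fV)) (x : Fin (m+1) → g) :
    (liftPair K m fg fV (fun i => (x i, 0))).2 = 0 := by
  have hvan : ∀ (y : Fin (m+1) → g) (i : Fin (m+1)), y i = 0 →
      (liftPair K m fg fV (fun i => (y i, 0))).2 = 0 := by
    intro y i hy
    have h0 : (fun i => ((y i, 0) : g × V)) i = 0 := by
      show ((y i, 0) : g × V) = 0
      rw [hy]
      rfl
    rw [F0_zero m fg fV halt i h0]
    rfl
  have hpres' : ∀ y : Fin (m+1) → g,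
      ∑ j : Fin (m+1), ((-1 : ℤ)^(j : ℕ)) • fV (fun l => y (j.succAbove l)) 0
        = ((-1 : ℤ)^m) • (liftPair K m fg fV (fun i => (y i, 0))).2 := by
    intro y
    rw [F0_snd_inl, Finset.smul_sum]
    refine Finset.sum_congr rfl fun j _ => ?_
    rw [smul_smul, ← pow_add]
    congr 1
    rw [show m + ((j : ℕ) + m) = (j : ℕ) + 2*m by ring, pow_add, pow_mul]
    norm_num
  set X : Fin (m+2) → g := Fin.snoc x 0 with hX
  -- the key cancellation via an involution
  have hbound : ∀ (c : Fin (m+2)) (j : Fin (m+1)),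
      ¬ ((c.succAbove j : ℕ) < (c : ℕ)) → (c : ℕ) < m + 1 := by
    intro c j h
    have hne := Fin.succAbove_ne c j
    have h1 : (c.succAbove j : ℕ) ≠ (c : ℕ) := fun hh => hne (Fin.ext hh)
    have h2 : (c.succAbove j : ℕ) ≤ m + 1 := Fin.is_le _
    omega
  have hkey : ∑ p : Fin (m+2) × Fin (m+1), ((-1 : ℤ)^((p.1 : ℕ) + (p.2 : ℕ))) •
      fV (fun l => X (p.1.succAbove (p.2.succAbove l))) 0 = 0 := by
    set invo : Fin (m+2) × Fin (m+1) → Fin (m+2) × Fin (m+1) := fun p =>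
      if h : (p.1.succAbove p.2 : ℕ) < (p.1 : ℕ) then
        (p.1.succAbove p.2, ⟨(p.1 : ℕ) - 1, by omega⟩)
      else
        (p.1.succAbove p.2, ⟨(p.1 : ℕ), by have := hbound p.1 p.2 h; omega⟩) with hinvo
    have hval_lt : ∀ (c : Fin (m+2)) (j : Fin (m+1)) (h : (c.succAbove j : ℕ) < (c : ℕ)),
        invo (c, j) = (c.succAbove j, ⟨(c : ℕ) - 1, by omega⟩) := by
      intro c j h
      rw [hinvo]
      exact dif_pos h
    have hval_ge : ∀ (c : Fin (m+2)) (j : Fin (m+1)) (h : ¬ ((c.succAbove j : ℕ) < (c : ℕ))),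
        invo (c, j) = (c.succAbove j, ⟨(c : ℕ), by have := hbound c j h; omega⟩) := by
      intro c j h
      rw [hinvo]
      exact dif_neg h
    have dval : ∀ (c : Fin (m+2)) (j : Fin (m+1)),
        ((c.succAbove j : ℕ) = (j : ℕ) ∧ (j : ℕ) < (c : ℕ)) ∨
        ((c.succAbove j : ℕ) = (j : ℕ) + 1 ∧ (c : ℕ) ≤ (j : ℕ)) := by
      intro c j
      rcases lt_or_ge (j.castSucc) c with hlt | hle
      · left
        constructor
        · rw [Fin.succAbove_of_castSucc_lt _ _ hlt]; rfl
        · simpa [Fin.lt_def] using hlt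
      · right
        constructor
        · rw [Fin.succAbove_of_le_castSucc _ _ hle]; rfl
        · simpa [Fin.le_def] using hle
    have hback : ∀ (c : Fin (m+2)) (j : Fin (m+1)),
        (invo (c, j)).1.succAbove (invo (c, j)).2 = c := by
      intro c j
      rcases dval c j with ⟨hd, hlt⟩ | ⟨hd, hle⟩
      · rw [hval_lt c j (by omega)]
        show (c.succAbove j).succAbove ⟨(c : ℕ) - 1, by omega⟩ = c
        rw [Fin.succAbove_of_le_castSucc]
        · ext
          simp only [Fin.val_succ]
          omega
        · rw [Fin.le_def]
          simp only [Fin.coe_castSucc]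
          omega
      · rw [hval_ge c j (by omega)]
        show (c.succAbove j).succAbove ⟨(c : ℕ), by have := hbound c j (by omega); omega⟩ = c
        rw [Fin.succAbove_of_castSucc_lt]
        · ext
          simp only [Fin.coe_castSucc]
        · rw [Fin.lt_def]
          simp only [Fin.coe_castSucc]
          omega
    have hfst : ∀ (c : Fin (m+2)) (j : Fin (m+1)), (invo (c, j)).1 = c.succAbove j := by
      intro c j
      by_cases h : ((c.succAbove j : ℕ) < (c : ℕ))
      · rw [hval_lt c j h]
      · rw [hval_ge c j h]
    have hsndval : ∀ (c : Fin (m+2)) (j : Fin (m+1)),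
        ((invo (c, j)).2 : ℕ) = (c : ℕ) - 1 ∨ ((invo (c, j)).2 : ℕ) = (c : ℕ) := by
      intro c j
      by_cases h : ((c.succAbove j : ℕ) < (c : ℕ))
      · left; rw [hval_lt c j h]
      · right; rw [hval_ge c j h]
    apply Finset.sum_ninvolution invo
    · -- pairing sums to zero
      rintro ⟨c, j⟩
      have hargs : (fun l => X (c.succAbove (j.succAbove l)))
          = fun l => X ((invo (c, j)).1.succAbove ((invo (c, j)).2.succAbove l)) := by
        have h1 := hfst c j
        have h2 : (c.succAbove j).succAbove (invo (c, j)).2 = c := by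
          rw [← h1]
          exact hback c j
        have hset : ({c, c.succAbove j} : Set (Fin (m+2)))
            = {(invo (c, j)).1, (invo (c, j)).1.succAbove (invo (c, j)).2} := by
          rw [h1, h2]
          exact Set.pair_comm c (c.succAbove j)
        have := succAbove_comp_eq c (invo (c, j)).1 j (invo (c, j)).2 hset
        exact congrArg (fun u => fun l => X (u l)) this
      show ((-1 : ℤ)^((c : ℕ) + (j : ℕ))) • fV (fun l => X (c.succAbove (j.succAbove l))) 0
          + ((-1 : ℤ)^(((invo (c, j)).1 : ℕ) + ((invo (c, j)).2 : ℕ))) •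
            fV (fun l => X ((invo (c, j)).1.succAbove ((invo (c, j)).2.succAbove l))) 0 = 0
      rw [← hargs, ← add_smul]
      have hpar : (((c : ℕ) + (j : ℕ)) + (((invo (c, j)).1 : ℕ) + ((invo (c, j)).2 : ℕ))) % 2
          = 1 := by
        have h1 : ((invo (c, j)).1 : ℕ) = (c.succAbove j : ℕ) := by rw [hfst c j]
        rcases hsndval c j with h2 | h2 <;> rcases dval c j with ⟨hd, hx⟩ | ⟨hd, hx⟩
        · omega
        · -- snd = c - 1 but branch was ge: impossible unless consistent; resolve via branch facts
          by_cases hbr : ((c.succAbove j : ℕ) < (c : ℕ))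
          · omega
          · have := congrArg (fun q : _ × Fin (m+1) => ((q.2 : ℕ))) (hval_ge c j hbr)
            simp only at this
            omega
        · by_cases hbr : ((c.succAbove j : ℕ) < (c : ℕ))
          · have := congrArg (fun q : _ × Fin (m+1) => ((q.2 : ℕ))) (hval_lt c j hbr)
            simp only at this
            omega
          · omega
        · omega
      rw [neg_one_pow_sum hpar, zero_smul]
    · -- no fixed points
      rintro ⟨c, j⟩ _
      intro hcontra
      have := congrArg Prod.fst hcontra
      rw [hfst c j] at this
      exact Fin.succAbove_ne c j this
    · intro p; exact Finset.mem_univ _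
    · -- involution
      rintro ⟨c, j⟩
      have h1 := hfst c j
      have h2 : (c.succAbove j).succAbove (invo (c, j)).2 = c := by
        rw [← h1]; exact hback c j
      have h2v : ((c.succAbove j).succAbove (invo (c, j)).2 : ℕ) = (c : ℕ) :=
        congrArg Fin.val h2
      have hpair : invo (c, j) = (c.succAbove j, (invo (c, j)).2) := by
        rw [← h1]
      rcases dval c j with ⟨hd, hlt⟩ | ⟨hd, hle⟩
      · -- here d < c, so invo (c,j) = (d, c-1); next step uses the ge branch
        have hsnd : ((invo (c, j)).2 : ℕ) = (c : ℕ) - 1 := by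
          have := congrArg (fun q : _ × Fin (m+1) => ((q.2 : ℕ))) (hval_lt c j (by omega))
          simp only at this
          rw [this]
        rw [hpair]
        rw [hval_ge (c.succAbove j) (invo (c, j)).2 (by omega)]
        ext
        · show ((c.succAbove j).succAbove (invo (c, j)).2 : ℕ) = (c : ℕ)
          exact h2v
        · show (c.succAbove j : ℕ) = (j : ℕ)
          omega
      · -- here d = j+1 > c, so invo (c,j) = (d, c); next step uses the lt branch
        have hsnd : ((invo (c, j)).2 : ℕ) = (c : ℕ) := by
          have := congrArg (fun q : _ × Fin (m+1) => ((q.2 : ℕ))) (hval_ge c j (by omega))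
          simp only at this
          rw [this]
        rw [hpair]
        rw [hval_lt (c.succAbove j) (invo (c, j)).2 (by omega)]
        ext
        · show ((c.succAbove j).succAbove (invo (c, j)).2 : ℕ) = (c : ℕ)
          exact h2v
        · show ((c.succAbove j : ℕ)) - 1 = (j : ℕ)
          omega
  -- now conclude
  rw [Fintype.sum_prod_type] at hkey
  have hinner : ∀ c : Fin (m+2),
      (∑ j : Fin (m+1), ((-1 : ℤ)^((c : ℕ) + (j : ℕ))) •
        fV (fun l => X (c.succAbove (j.succAbove l))) 0)
      = ((-1 : ℤ)^(c : ℕ)) • ((-1 : ℤ)^m) •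
          (liftPair K m fg fV (fun i => (X (c.succAbove i), 0))).2 := by
    intro c
    rw [← hpres' (fun i => X (c.succAbove i)), Finset.smul_sum]
    refine Finset.sum_congr rfl fun j _ => ?_
    rw [smul_smul, ← pow_add]
  rw [Finset.sum_congr rfl (fun c _ => hinner c)] at hkey
  have hzero : ∀ c : Fin (m+2), c ≠ Fin.last (m+1) →
      ((-1 : ℤ)^(c : ℕ)) • ((-1 : ℤ)^m) •
        (liftPair K m fg fV (fun i => (X (c.succAbove i), 0))).2 = 0 := by
    intro c hc
    obtain ⟨l, hl⟩ := Fin.exists_succAbove_eq (Ne.symm hc)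
    rw [hvan _ l (by rw [hl, hX, Fin.snoc_last]), smul_zero, smul_zero]
  rw [Finset.sum_eq_single_of_mem (Fin.last (m+1)) (Finset.mem_univ _)
    (fun c _ hc => hzero c hc)] at hkey
  have hXlast : (fun i => ((X ((Fin.last (m+1)).succAbove i), 0) : g × V))
      = fun i => (x i, 0) := by
    funext i
    rw [Fin.succAbove_last, hX, Fin.snoc_castSucc]
  rw [hXlast] at hkey
  have hfin : ((-1 : ℤ)^((Fin.last (m+1) : ℕ))) • ((-1 : ℤ)^m) •
      (liftPair K m fg fV (fun i => (x i, 0))).2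
      = (-1 : ℤ) • (liftPair K m fg fV (fun i => (x i, 0))).2 := by
    rw [smul_smul, ← pow_add, Fin.val_last]
    congr 1
    have hodd : Odd (m + 1 + m) := ⟨m, by ring⟩
    exact hodd.neg_one_pow
  rw [hfin, neg_smul, one_smul, neg_eq_zero] at hkey
  exact hkey

end Halt

section Patterns

variable {K g V : Type*} [Field K] [AddCommGroup g] [Module K g]
  [AddCommGroup V] [Module K V]
  (T : V →ₗ[K] g) (m : ℕ) (fg : (Fin (m+1) → g) → g) (fV : (Fin m → g) → V → V)

/-- The normalization of `fV` killing the value at `0`. -/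
def fV1 : (Fin m → g) → V → V := fun y b => fV y b - fV y 0

lemma fV1_zero (y : Fin m → g) : fV1 m fV y 0 = 0 := sub_self _

lemma F0_snd' (halt : IsMultiAlt K (liftPair K m fg fV)) (w : Fin (m+1) → g × V) :
    (liftPair K m fg fV w).2
      = ∑ j : Fin (m+1), ((-1 : ℤ)^((j : ℕ) + m)) •
          fV1 m fV (fun l => (w (j.succAbove l)).1) ((w j).2) := by
  have h0 : ∑ j : Fin (m+1), ((-1 : ℤ)^((j : ℕ) + m)) •
      fV (fun l => (w (j.succAbove l)).1) 0 = 0 := by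
    rw [← F0_snd_inl (K := K) m fg fV (fun i => (w i).1)]
    exact phi_zero m fg fV halt _
  rw [F0_snd]
  calc (∑ j : Fin (m+1), ((-1 : ℤ)^((j : ℕ) + m)) •
          fV (fun l => (w (j.succAbove l)).1) ((w j).2))
      = ∑ j : Fin (m+1), (((-1 : ℤ)^((j : ℕ) + m)) •
            fV (fun l => (w (j.succAbove l)).1) ((w j).2)
          - ((-1 : ℤ)^((j : ℕ) + m)) • fV (fun l => (w (j.succAbove l)).1) 0) := by
        rw [Finset.sum_sub_distrib, h0, sub_zero]
    _ = _ := by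
        refine Finset.sum_congr rfl fun j _ => ?_
        rw [← smul_sub]
        rfl

lemma fV1_eq (halt : IsMultiAlt K (liftPair K m fg fV)) (y : Fin m → g) (b : V) :
    fV1 m fV y b
      = (liftPair K m fg fV
          (Fin.snoc (fun l : Fin m => ((y l, 0) : g × V)) ((0 : g), b))).2 := by
  set w0 : Fin (m+1) → g × V :=
    Fin.snoc (fun l : Fin m => ((y l, 0) : g × V)) ((0 : g), b) with hw0
  have hside : ∀ j ∈ (Finset.univ : Finset (Fin (m+1))), j ≠ Fin.last m →
      ((-1 : ℤ)^((j : ℕ) + m)) • fV1 m fV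
        (fun l => (w0 (j.succAbove l)).1) ((w0 j).2) = 0 := by
    intro j _ hj
    obtain ⟨l, rfl⟩ : ∃ l : Fin m, l.castSucc = j := ⟨j.castPred hj, by simp⟩
    have h2 : (w0 l.castSucc).2 = 0 := by rw [hw0, Fin.snoc_castSucc]
    rw [h2, fV1_zero m fV, smul_zero]
  rw [F0_snd' m fg fV halt, Finset.sum_eq_single_of_mem (Fin.last m)
    (Finset.mem_univ _) hside]
  have hsign : ((-1 : ℤ)^(((Fin.last m) : ℕ) + m)) = 1 := by
    rw [Fin.val_last]
    exact Even.neg_one_pow ⟨m, by ring⟩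
  rw [hsign, one_smul]
  have h2 : (fun l => (w0 ((Fin.last m).succAbove l)).1) = y := by
    funext l
    rw [hw0, Fin.succAbove_last, Fin.snoc_castSucc]
  have h1 : (w0 (Fin.last m)).2 = b := by rw [hw0, Fin.snoc_last]
  rw [h1, h2]

lemma fV1_zero_left (halt : IsMultiAlt K (liftPair K m fg fV)) (y : Fin m → g) (b : V)
    (l : Fin m) (h : y l = 0) : fV1 m fV y b = 0 := by
  rw [fV1_eq m fg fV halt]
  have h0 : (Fin.snoc (fun l : Fin m => ((y l, 0) : g × V)) ((0 : g), b)
        : Fin (m+1) → g × V) l.castSucc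
      = 0 := by
    rw [Fin.snoc_castSucc, h]
    rfl
  rw [F0_zero m fg fV halt _ h0]
  rfl

/-- Input pattern: positions in `S` carry `(0, aᵢ)`, the others `(T aᵢ, 0)`. -/
def patt (S : Finset (Fin (m+1))) (a : Fin (m+1) → V) : Fin (m+1) → g × V :=
  fun i => if i ∈ S then ((0 : g), a i) else (T (a i), 0)

/-- `T`-twisted input: `(T aᵢ, aᵢ)` on `S`, `(T aᵢ, 0)` elsewhere. -/
def twist (S : Finset (Fin (m+1))) (a : Fin (m+1) → V) : Fin (m+1) → g × V :=
  fun i => (T (a i), if i ∈ S then a i else 0)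

lemma twist_fst (S : Finset (Fin (m+1))) (a : Fin (m+1) → V) :
    (liftPair K m fg fV (twist T m S a)).1 = fg (fun i => T (a i)) := rfl

lemma twist_snd (halt : IsMultiAlt K (liftPair K m fg fV)) (S : Finset (Fin (m+1)))
    (a : Fin (m+1) → V) :
    (liftPair K m fg fV (twist T m S a)).2
      = ∑ i ∈ S, ((-1 : ℤ)^((i : ℕ) + m)) •
          fV1 m fV (fun l => T (a (i.succAbove l))) (a i) := by
  rw [F0_snd' m fg fV halt]
  rw [← Finset.sum_subset (Finset.subset_univ S) (fun j _ hj => by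
    have h2 : (twist T m S a j).2 = 0 := by simp [twist, hj]
    rw [h2, fV1_zero m fV, smul_zero])]
  refine Finset.sum_congr rfl fun i hi => ?_
  have h2 : (twist T m S a i).2 = a i := by simp [twist, hi]
  have h1 : (fun l => (twist T m S a (i.succAbove l)).1)
      = fun l => T (a (i.succAbove l)) := rfl
  rw [h2, h1]

lemma fg_perm (halt : IsMultiAlt K (liftPair K m fg fV)) (y : Fin (m+1) → g)
    (σ : Equiv.Perm (Fin (m+1))) :
    fg (fun i => y (σ i)) = ((Equiv.Perm.sign σ : ℤˣ) : ℤ) • fg y := by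
  have h := F0_perm m fg fV halt (fun i => ((y i, 0) : g × V)) σ
  have h1 := congrArg Prod.fst h
  rw [Prod.smul_fst] at h1
  exact h1

/-- cons of a `T`-image onto a shifted pattern is again a pattern. -/
lemma cons_patt (S : Finset (Fin (m+1))) (a : Fin (m+1) → V) (j : Fin (m+1)) (c : V) :
    Fin.cons ((T c, (0 : V)) : g × V) (patt T m S a ∘ j.succAbove)
      = patt T m (Finset.map (fP j).symm.toEmbedding (S.erase j))
          (Fin.cons c (fun l => a (j.succAbove l))) := by
  funext i
  induction i using Fin.cases with
  | zero =>
    rw [Fin.cons_zero]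
    have hmem : (0 : Fin (m+1)) ∉ Finset.map (fP j).symm.toEmbedding (S.erase j) := by
      rw [Finset.mem_map_equiv, Equiv.symm_symm, fP_zero]
      exact Finset.notMem_erase j S
    simp only [patt, Fin.cons_zero]
    rw [if_neg hmem]
  | succ l =>
    rw [Fin.cons_succ]
    have hmem : l.succ ∈ Finset.map (fP j).symm.toEmbedding (S.erase j)
        ↔ j.succAbove l ∈ S := by
      rw [Finset.mem_map_equiv, Equiv.symm_symm, fP_succ, Finset.mem_erase]
      exact ⟨fun h => h.2, fun h => ⟨Fin.succAbove_ne j l, h⟩⟩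
    show patt T m S a (j.succAbove l) = _
    simp only [patt, Fin.cons_succ]
    by_cases hm : j.succAbove l ∈ S
    · rw [if_pos hm, if_pos (hmem.mpr hm)]
    · rw [if_neg hm, if_neg (fun h => hm (hmem.mp h))]

lemma cons_eq_comp_fP (a : Fin (m+1) → V) (j : Fin (m+1)) :
    Fin.cons (a j) (fun l => a (j.succAbove l)) = fun i => a (fP j i) := by
  funext i
  induction i using Fin.cases with
  | zero => rw [Fin.cons_zero, fP_zero]
  | succ l => rw [Fin.cons_succ, fP_succ]

lemma twist_comp (S₀ : Finset (Fin (m+1))) (a : Fin (m+1) → V)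
    (σ : Equiv.Perm (Fin (m+1))) :
    twist T m (Finset.map σ.symm.toEmbedding S₀) (fun i => a (σ i))
      = (twist T m S₀ a) ∘ σ := by
  funext i
  have hmem : i ∈ Finset.map σ.symm.toEmbedding S₀ ↔ σ i ∈ S₀ := by
    rw [Finset.mem_map_equiv, Equiv.symm_symm]
  show (T (a (σ i)), if i ∈ Finset.map σ.symm.toEmbedding S₀ then a (σ i) else 0)
      = (T (a (σ i)), if σ i ∈ S₀ then a (σ i) else 0)
  by_cases hm : σ i ∈ S₀
  · rw [if_pos hm, if_pos (hmem.mpr hm)]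
  · rw [if_neg hm, if_neg (fun h => hm (hmem.mp h))]

lemma smul_collapse {M : Type*} [AddCommGroup M] (j : ℕ) (c : ℤ) (x : M) :
    ((-1 : ℤ)^j) • c • ((-1 : ℤ)^j) • x = c • x := by
  have h2 : (-1 : ℤ)^j * (-1 : ℤ)^j = 1 := by
    rw [← pow_add]
    exact Even.neg_one_pow ⟨j, by ring⟩
  have h : (-1 : ℤ)^j * c * (-1 : ℤ)^j = c := by
    calc (-1 : ℤ)^j * c * (-1 : ℤ)^j = c * ((-1 : ℤ)^j * (-1 : ℤ)^j) := by ring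
    _ = c := by rw [h2, mul_one]
  rw [smul_smul, smul_smul, h]

lemma sum_inl {ι : Type*} (s : Finset ι) (f : ι → g) :
    (∑ j ∈ s, ((f j, (0 : V)) : g × V)) = ((∑ j ∈ s, f j, 0) : g × V) := by
  refine Prod.ext ?_ ?_
  · exact map_sum (AddMonoidHom.fst g V) _ s
  · refine Eq.trans (map_sum (AddMonoidHom.snd g V) _ s) ?_
    simp

lemma sum_inr {ι : Type*} (s : Finset ι) (f : ι → V) :
    (∑ j ∈ s, (((0 : g), f j) : g × V)) = ((0, ∑ j ∈ s, f j) : g × V) := by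
  refine Prod.ext ?_ ?_
  · refine Eq.trans (map_sum (AddMonoidHom.fst g V) _ s) ?_
    simp
  · exact map_sum (AddMonoidHom.snd g V) _ s

/-- Double counting over erased sets. -/
lemma double_count (halt : IsMultiAlt K (liftPair K m fg fV)) (S : Finset (Fin (m+1)))
    (a : Fin (m+1) → V) :
    (∑ j ∈ S, (liftPair K m fg fV (twist T m (S.erase j) a)).2)
        + (liftPair K m fg fV (twist T m S a)).2
      = S.card • (liftPair K m fg fV (twist T m S a)).2 := by
  have hterm : ∀ j ∈ S, (liftPair K m fg fV (twist T m (S.erase j) a)).2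
      = (liftPair K m fg fV (twist T m S a)).2
        - ((-1 : ℤ)^((j : ℕ) + m)) • fV1 m fV (fun l => T (a (j.succAbove l))) (a j) := by
    intro j hj
    rw [twist_snd T m fg fV halt, twist_snd T m fg fV halt]
    exact Finset.sum_erase_eq_sub hj
  rw [Finset.sum_congr rfl hterm, Finset.sum_sub_distrib, Finset.sum_const,
    ← twist_snd T m fg fV halt S a, sub_add_cancel]

end Patterns

section Core

variable {K g V : Type*} [Field K] [AddCommGroup g] [Module K g]
  [AddCommGroup V] [Module K V]
  (T : V →ₗ[K] g) (m : ℕ) (fg : (Fin (m+1) → g) → g) (fV : (Fin m → g) → V → V)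

lemma core (halt : IsMultiAlt K (liftPair K m fg fV)) (k : ℕ) :
    ∀ (S : Finset (Fin (m+1))) (a : Fin (m+1) → V),
    ((fun G => nrBracket m 0 G (hatT T))^[k] (liftPair K m fg fV)) (patt T m S a)
      = if S.card = k then
          ((k.factorial : ℤ) •
            (fg (fun i => T (a i)) - T ((liftPair K m fg fV (twist T m S a)).2)), 0)
        else if S.card = k + 1 then
          (0, (k.factorial : ℤ) • (liftPair K m fg fV (twist T m S a)).2)
        else 0 := by
  induction k with
  | zero =>
    intro S a
    simp only [Function.iterate_zero, id_eq, Nat.factorial_zero, Nat.cast_one, one_smul]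
    by_cases h0 : S.card = 0
    · rw [if_pos h0]
      obtain rfl : S = ∅ := Finset.card_eq_zero.mp h0
      have hpe : patt T m ∅ a = fun i => (T (a i), 0) := by
        funext i
        simp [patt]
      have hte : twist T m ∅ a = fun i => (T (a i), 0) := by
        funext i
        simp [twist]
      have h2 : (liftPair K m fg fV (twist T m ∅ a)).2 = 0 := by
        rw [hte]
        exact phi_zero m fg fV halt _
      rw [hpe, h2, map_zero, sub_zero]
      refine Prod.ext rfl ?_
      show (liftPair K m fg fV fun i => (T (a i), 0)).2 = 0
      exact phi_zero m fg fV halt _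
    · rw [if_neg h0]
      by_cases h1 : S.card = 1
      · rw [if_pos (by omega : S.card = 0 + 1)]
        obtain ⟨i₀, rfl⟩ := Finset.card_eq_one.mp h1
        refine Prod.ext ?_ ?_
        · show fg (fun i => (patt T m {i₀} a i).1) = (0 : g × V).1
          rw [Prod.fst_zero]
          have hz : liftPair K m fg fV (fun i => ((patt T m {i₀} a i).1, 0)) = 0 :=
            F0_zero m fg fV halt i₀ (by simp [patt])
          exact congrArg Prod.fst hz
        · show (liftPair K m fg fV (patt T m {i₀} a)).2
            = (liftPair K m fg fV (twist T m {i₀} a)).2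
          rw [F0_snd' m fg fV halt, F0_snd' m fg fV halt]
          refine Finset.sum_congr rfl fun j _ => ?_
          by_cases hj : j = i₀
          · subst hj
            have hA : (patt T m {j} a j).2 = a j := by simp [patt]
            have hB : (twist T m {j} a j).2 = a j := by simp [twist]
            have hargs : (fun l => (patt T m {j} a (j.succAbove l)).1)
                = fun l => (twist T m {j} a (j.succAbove l)).1 := by
              funext l
              have hne : j.succAbove l ∉ ({j} : Finset (Fin (m+1))) := by
                simp [Fin.succAbove_ne j l]
              simp [patt, twist, hne]
            rw [hA, hB, hargs]
          · have hA : (patt T m {i₀} a j).2 = 0 := by simp [patt, hj]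
            have hB : (twist T m {i₀} a j).2 = 0 := by simp [twist, hj]
            rw [hA, hB, fV1_zero m fV, fV1_zero m fV, smul_zero]
      · rw [if_neg (by omega)]
        refine Prod.ext ?_ ?_
        · obtain ⟨i₀, hi₀⟩ := (Finset.card_pos (s := S)).mp (by omega)
          show fg (fun i => (patt T m S a i).1) = (0 : g × V).1
          rw [Prod.fst_zero]
          have hz : liftPair K m fg fV (fun i => ((patt T m S a i).1, 0)) = 0 :=
            F0_zero m fg fV halt i₀ (by simp [patt, hi₀])
          exact congrArg Prod.fst hz
        · show (liftPair K m fg fV (patt T m S a)).2 = (0 : g × V).2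
          rw [Prod.snd_zero, F0_snd' m fg fV halt]
          apply Finset.sum_eq_zero
          intro j _
          by_cases hj : j ∈ S
          · obtain ⟨i, hiS, hij⟩ := Finset.exists_mem_ne (s := S) (by omega) j
            obtain ⟨l, hl⟩ := Fin.exists_succAbove_eq hij
            have hzero : (patt T m S a (j.succAbove l)).1 = 0 := by
              rw [hl]
              simp [patt, hiS]
            rw [fV1_zero_left m fg fV halt _ _ l hzero, smul_zero]
          · have hz2 : (patt T m S a j).2 = 0 := by simp [patt, hj]
            rw [hz2, fV1_zero m fV, smul_zero]
  | succ k IH =>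
    intro S a
    rw [Function.iterate_succ_apply', bracket_eval T m]
    have hsgn : ∀ j : Fin (m+1), ((Equiv.Perm.sign (fP j) : ℤˣ) : ℤ) = (-1 : ℤ)^(j : ℕ) := by
      intro j
      rw [sign_fP]
      simp
    have hfact : ((k+1).factorial : ℤ) = ((k : ℤ) + 1) * (k.factorial : ℤ) := by
      rw [Nat.factorial_succ]
      push_cast
      ring
    -- value of the summand for j ∈ S
    have hterm : ∀ j ∈ S,
        ((-1 : ℤ)^(j : ℕ)) • ((fun G => nrBracket m 0 G (hatT T))^[k] (liftPair K m fg fV))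
            (Fin.cons ((T ((patt T m S a j).2), (0 : V)) : g × V) (patt T m S a ∘ j.succAbove))
          = if S.card - 1 = k then
              ((k.factorial : ℤ) • (fg (fun i => T (a i))
                - T ((liftPair K m fg fV (twist T m (S.erase j) a)).2)), 0)
            else if S.card - 1 = k + 1 then
              (0, (k.factorial : ℤ) • (liftPair K m fg fV (twist T m (S.erase j) a)).2)
            else 0 := by
      intro j hj
      have hpj : (patt T m S a j).2 = a j := by simp [patt, hj]
      rw [hpj, cons_patt T m S a j (a j), cons_eq_comp_fP m a j, IH]
      rw [Finset.card_map, Finset.card_erase_of_mem hj]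
      rw [twist_comp T m (S.erase j) a (fP j)]
      rw [F0_perm m fg fV halt (twist T m (S.erase j) a) (fP j)]
      rw [fg_perm m fg fV halt (fun i => T (a i)) (fP j)]
      rw [hsgn j]
      split_ifs with h1 h2
      · rw [Prod.smul_snd, map_zsmul, ← smul_sub, Prod.smul_mk, smul_zero, smul_collapse]
      · rw [Prod.smul_snd, Prod.smul_mk, smul_zero, smul_collapse]
      · rw [smul_zero]
    -- the complementary sum vanishes
    have hout : ∀ j ∈ Sᶜ,
        ((-1 : ℤ)^(j : ℕ)) • ((fun G => nrBracket m 0 G (hatT T))^[k] (liftPair K m fg fV))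
            (Fin.cons ((T ((patt T m S a j).2), (0 : V)) : g × V) (patt T m S a ∘ j.succAbove))
          = 0 := by
      intro j hjc
      have hj : j ∉ S := by simpa using hjc
      have hpj : (patt T m S a j).2 = 0 := by simp [patt, hj]
      rw [hpj, cons_patt T m S a j 0, IH]
      have hb0 : (Fin.cons (0 : V) (fun l => a (j.succAbove l)) : Fin (m+1) → V) 0 = 0 :=
        Fin.cons_zero _ _
      have hfg : fg (fun i => T ((Fin.cons (0 : V) (fun l => a (j.succAbove l))
          : Fin (m+1) → V) i)) = 0 := by
        have hz : liftPair K m fg fV (fun i => ((T ((Fin.cons (0 : V)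
            (fun l => a (j.succAbove l)) : Fin (m+1) → V) i) : g), (0 : V))) = 0 := by
          apply F0_zero m fg fV halt 0
          show ((T ((Fin.cons (0 : V) (fun l => a (j.succAbove l)) : Fin (m+1) → V) 0) : g),
            (0 : V)) = 0
          rw [hb0, map_zero]
          rfl
        exact congrArg Prod.fst hz
      have htw : liftPair K m fg fV (twist T m
          (Finset.map (fP j).symm.toEmbedding (S.erase j))
          (Fin.cons (0 : V) (fun l => a (j.succAbove l)))) = 0 := by
        apply F0_zero m fg fV halt 0
        show ((T ((Fin.cons (0 : V) (fun l => a (j.succAbove l)) : Fin (m+1) → V) 0) : g),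
          if (0 : Fin (m+1)) ∈ Finset.map (fP j).symm.toEmbedding (S.erase j) then
            (Fin.cons (0 : V) (fun l => a (j.succAbove l)) : Fin (m+1) → V) 0 else 0) = 0
        rw [hb0, map_zero, ite_self]
        rfl
      split_ifs with h1 h2
      · rw [hfg, htw]
        simp
      · rw [htw]
        simp
      · rw [smul_zero]
    rw [← Finset.sum_add_sum_compl S, Finset.sum_eq_zero hout, add_zero]
    by_cases hc1 : S.card = k + 1
    · -- contributes to the first component
      have hterm1 : ∀ j ∈ S,
          ((-1 : ℤ)^(j : ℕ)) • ((fun G => nrBracket m 0 G (hatT T))^[k] (liftPair K m fg fV))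
              (Fin.cons ((T ((patt T m S a j).2), (0 : V)) : g × V)
                (patt T m S a ∘ j.succAbove))
            = ((k.factorial : ℤ) • (fg (fun i => T (a i))
                - T ((liftPair K m fg fV (twist T m (S.erase j) a)).2)), 0) := by
        intro j hj
        rw [hterm j hj, if_pos (by omega)]
      rw [Finset.sum_congr rfl hterm1, sum_inl, IH, if_neg (by omega : ¬ S.card = k),
        if_pos hc1]
      have hEsum : ∑ j ∈ S, (liftPair K m fg fV (twist T m (S.erase j) a)).2
          = (k : ℤ) • (liftPair K m fg fV (twist T m S a)).2 := by
        have hdc := double_count T m fg fV halt S a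
        rw [hc1] at hdc
        have h := eq_sub_of_add_eq hdc
        rw [h, succ_nsmul, add_sub_cancel_right, natCast_zsmul]
      have hcor : ((T (((0 : g), (k.factorial : ℤ) •
            (liftPair K m fg fV (twist T m S a)).2).2), (0 : V)) : g × V)
          = ((k.factorial : ℤ) • T ((liftPair K m fg fV (twist T m S a)).2), 0) := by
        show ((T ((k.factorial : ℤ) • (liftPair K m fg fV (twist T m S a)).2), (0 : V)) : g × V)
          = _
        rw [map_zsmul]
      rw [hcor, Prod.mk_sub_mk, sub_zero, if_pos hc1]
      refine congrArg (fun z => ((z, 0) : g × V)) ?_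
      rw [← Finset.smul_sum, Finset.sum_sub_distrib, Finset.sum_const, ← map_sum, hEsum,
        map_zsmul, hc1, ← natCast_zsmul]
      push_cast
      rw [smul_sub, smul_smul, smul_smul, sub_sub, ← add_smul, smul_sub, hfact]
      rw [show (k.factorial : ℤ) * ((k : ℤ) + 1) = ((k : ℤ) + 1) * (k.factorial : ℤ) from by
          ring,
        show (k.factorial : ℤ) * (k : ℤ) + (k.factorial : ℤ)
            = ((k : ℤ) + 1) * (k.factorial : ℤ) from by ring]
    · by_cases hc2 : S.card = k + 2
      · -- contributes to the second component
        have hterm2 : ∀ j ∈ S,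
            ((-1 : ℤ)^(j : ℕ)) • ((fun G => nrBracket m 0 G (hatT T))^[k]
                (liftPair K m fg fV))
                (Fin.cons ((T ((patt T m S a j).2), (0 : V)) : g × V)
                  (patt T m S a ∘ j.succAbove))
              = (0, (k.factorial : ℤ) •
                  (liftPair K m fg fV (twist T m (S.erase j) a)).2) := by
          intro j hj
          rw [hterm j hj, if_neg (by omega), if_pos (by omega)]
        rw [Finset.sum_congr rfl hterm2, sum_inr, IH, if_neg (by omega : ¬ S.card = k),
          if_neg hc1, if_pos (by omega : S.card = k + 1 + 1)]
        have hEsum : ∑ j ∈ S, (liftPair K m fg fV (twist T m (S.erase j) a)).2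
            = ((k : ℤ) + 1) • (liftPair K m fg fV (twist T m S a)).2 := by
          have hdc := double_count T m fg fV halt S a
          rw [hc2] at hdc
          have h := eq_sub_of_add_eq hdc
          rw [h, succ_nsmul, add_sub_cancel_right, ← natCast_zsmul]
          push_cast
          rfl
        have hcor : ((T (((0 : g × V)).2), (0 : V)) : g × V) = 0 := by
          rw [Prod.snd_zero, map_zero]
          rfl
        rw [hcor, sub_zero, if_neg hc1]
        refine congrArg (fun z => (((0 : g), z) : g × V)) ?_
        rw [← Finset.smul_sum, hEsum, smul_smul, hfact]
        rw [show (k.factorial : ℤ) * ((k : ℤ) + 1) = ((k : ℤ) + 1) * (k.factorial : ℤ) from by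
          ring]
      · -- everything vanishes
        have hterm3 : ∀ j ∈ S,
            ((-1 : ℤ)^(j : ℕ)) • ((fun G => nrBracket m 0 G (hatT T))^[k]
                (liftPair K m fg fV))
                (Fin.cons ((T ((patt T m S a j).2), (0 : V)) : g × V)
                  (patt T m S a ∘ j.succAbove))
              = 0 := by
          intro j hj
          have hpos : 0 < S.card := Finset.card_pos.mpr ⟨j, hj⟩
          rw [hterm j hj, if_neg (by omega), if_neg (by omega)]
        rw [Finset.sum_eq_zero hterm3, IH, if_neg hc1, if_neg hc2]
        by_cases hck : S.card = k <;> simp [hck, hc1]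

end Core

/-- the map `h_T f = (−1)^{n−2}(1/n!)[⋯[[f,T]_NR,T]_NR,⋯,T]_NR`
(`n` iterated brackets, `n = m+1`) is given on `f = (f_g,f_V)` by
`(h_T f)(v₁,…,vₙ) = (−1)ⁿ f_g(Tv₁,…,Tvₙ) + Σᵢ (−1)^{i+1} T f_V(Tv₁,…,T̂vᵢ,…,Tvₙ, vᵢ)`. -/
theorem stmt10 {K g V : Type*} [Field K] [CharZero K] [AddCommGroup g] [Module K g]
    [AddCommGroup V] [Module K V]
    (μ : g →ₗ[K] g →ₗ[K] g) (hskew : ∀ x y, μ x y = - μ y x)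
    (hjac : ∀ x y z, μ (μ x y) z + μ (μ y z) x + μ (μ z x) y = 0)
    (ρ : g →ₗ[K] Module.End K V)
    (hrep : ∀ x y, ρ (μ x y) = ρ x * ρ y - ρ y * ρ x)
    (T : V →ₗ[K] g)
    (hT : ∀ u v, μ (T u) (T v) = T (ρ (T u) v - ρ (T v) u))
    (m : ℕ) (fg : (Fin (m+1) → g) → g) (fV : (Fin m → g) → V → V)
    (halt : IsMultiAlt K (liftPair K m fg fV))
    (v : Fin (m+1) → V) :
    ((-1 : ℤ)^(m+1) • (((m+1).factorial : K)⁻¹ •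
        (((fun G => nrBracket m 0 G (hatT T))^[m+1]) (liftPair K m fg fV))))
      (fun i => ((0 : g), v i))
    = (((-1 : ℤ)^(m+1)) • fg (fun i => T (v i))
        + ∑ i : Fin (m+1), ((-1 : ℤ)^((i : ℕ))) •
            T (fV (fun j => T (v (i.succAbove j))) (v i)), 0) := by
  have hcore := core T m fg fV halt (m+1) Finset.univ v
  have hcard : (Finset.univ : Finset (Fin (m+1))).card = m + 1 := by simp
  rw [if_pos hcard] at hcore
  have hpatt : patt T m Finset.univ v = fun i => ((0 : g), v i) := by
    funext i
    simp [patt]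
  rw [hpatt] at hcore
  have hsum0 : (∑ i : Fin (m+1), ((-1 : ℤ)^((i : ℕ) + m)) •
      fV (fun l => T (v (i.succAbove l))) 0) = 0 := by
    rw [← F0_snd_inl (K := K) m fg fV (fun i => T (v i))]
    exact phi_zero m fg fV halt _
  have hE : T ((liftPair K m fg fV (twist T m Finset.univ v)).2)
      = ∑ i : Fin (m+1), ((-1 : ℤ)^((i : ℕ) + m)) •
          T (fV (fun l => T (v (i.succAbove l))) (v i)) := by
    rw [twist_snd T m fg fV halt, map_sum]
    have hsplit : ∀ i : Fin (m+1),
        T (((-1 : ℤ)^((i : ℕ) + m)) • fV1 m fV (fun l => T (v (i.succAbove l))) (v i))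
          = ((-1 : ℤ)^((i : ℕ) + m)) • T (fV (fun l => T (v (i.succAbove l))) (v i))
            - ((-1 : ℤ)^((i : ℕ) + m)) • T (fV (fun l => T (v (i.succAbove l))) 0) := by
      intro i
      rw [map_zsmul]
      show ((-1 : ℤ)^((i : ℕ) + m)) • T (fV (fun l => T (v (i.succAbove l))) (v i)
          - fV (fun l => T (v (i.succAbove l))) 0) = _
      rw [map_sub, smul_sub]
    rw [Finset.sum_congr rfl (fun i _ => hsplit i), Finset.sum_sub_distrib]
    have h2 : (∑ i : Fin (m+1), ((-1 : ℤ)^((i : ℕ) + m)) •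
        T (fV (fun l => T (v (i.succAbove l))) 0)) = 0 := by
      have h3 : ∀ i : Fin (m+1), ((-1 : ℤ)^((i : ℕ) + m)) •
          T (fV (fun l => T (v (i.succAbove l))) 0)
          = T (((-1 : ℤ)^((i : ℕ) + m)) • fV (fun l => T (v (i.succAbove l))) 0) :=
        fun i => (map_zsmul T _ _).symm
      rw [Finset.sum_congr rfl (fun i _ => h3 i), ← map_sum, hsum0, map_zero]
    rw [h2, sub_zero]
  rw [hE] at hcore
  rw [Pi.smul_apply, Pi.smul_apply, hcore]
  have hfne : (((m+1).factorial : K)) ≠ 0 :=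
    Nat.cast_ne_zero.mpr (Nat.factorial_ne_zero _)
  have hKsmul : ∀ D : g, (((m+1).factorial : K)⁻¹ •
      (((((m+1).factorial : ℤ)) • D, 0) : g × V)) = ((D, 0) : g × V) := by
    intro D
    have h1 : (((m+1).factorial : ℤ) • D) = (((m+1).factorial : K)) • D := by
      rw [← Int.cast_smul_eq_zsmul K]
      norm_num
    rw [Prod.smul_mk, smul_zero, h1, inv_smul_smul₀ hfne]
  rw [hKsmul, Prod.smul_mk, smul_zero]
  refine congrArg (fun z => ((z, 0) : g × V)) ?_
  rw [smul_sub, Finset.smul_sum]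
  have hterm : ∀ i : Fin (m+1), ((-1 : ℤ)^(m+1)) • (((-1 : ℤ)^((i : ℕ) + m)) •
      T (fV (fun l => T (v (i.succAbove l))) (v i)))
      = -(((-1 : ℤ)^((i : ℕ))) • T (fV (fun l => T (v (i.succAbove l))) (v i))) := by
    intro i
    rw [smul_smul, ← neg_smul]
    congr 1
    rw [← pow_add, show (m+1) + ((i : ℕ) + m) = (i : ℕ) + (2*m+1) by ring, pow_add]
    have hodd : ((-1 : ℤ))^(2*m+1) = -1 := Odd.neg_one_pow ⟨m, by ring⟩
    rw [hodd]
    ring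
  rw [Finset.sum_congr rfl (fun i _ => hterm i), Finset.sum_neg_distrib, sub_neg_eq_add]
end

section
/- Let g be a finite-dimensional Lie algebra and r ∈ Λ²g. Then r satisfies the classical Yang-Baxter equation [r,r]_SN = 0 if and only if the induced map r♯ : g* → g, defined by ⟨r♯(ξ), η⟩ = ⟨r, ξ∧η⟩, is a relative Rota-Baxter operator on g with respect to the coadjoint representation ad*, i.e., [r♯ξ, r♯η] = r♯(ad*_{r♯ξ} η − ad*_{r♯η} ξ) for all ξ, η ∈ g*. -/
/-- The coadjoint action: `⟨ad*_x ξ, y⟩ = −⟨ξ, [x,y]⟩`. -/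
def coad {K g : Type*} [CommRing K] [LieRing g] [LieAlgebra K g]
    (x : g) (ξ : Module.Dual K g) : Module.Dual K g :=
  - (ξ ∘ₗ (LieAlgebra.ad K g x))

/-- for a finite-dimensional Lie algebra `g` and a skew-symmetric
`r ∈ Λ²g` (encoded by `r♯ : g* → g` with `⟨r♯ξ,η⟩ = ⟨r, ξ∧η⟩`), `r` satisfies the
classical Yang-Baxter equation `[r,r]_SN = 0` — equivalently the cyclic condition
`⟨ξ,[r♯η,r♯ζ]⟩ + ⟨η,[r♯ζ,r♯ξ]⟩ + ⟨ζ,[r♯ξ,r♯η]⟩ = 0` — iff `r♯` is a relative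
Rota-Baxter operator with respect to the coadjoint representation. -/
theorem stmt14 {K g : Type*} [Field K] [LieRing g] [LieAlgebra K g]
    [Module.Finite K g]
    (r : Module.Dual K g →ₗ[K] g)
    (hskew : ∀ ξ η : Module.Dual K g, η (r ξ) = - ξ (r η)) :
    (∀ ξ η ζ : Module.Dual K g,
        ξ ⁅r η, r ζ⁆ + η ⁅r ζ, r ξ⁆ + ζ ⁅r ξ, r η⁆ = 0) ↔
    (∀ ξ η : Module.Dual K g,
        ⁅r ξ, r η⁆ = r (coad (r ξ) η - coad (r η) ξ)) := by
  have key : ∀ ξ η ζ : Module.Dual K g,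
      ζ (r (coad (r ξ) η - coad (r η) ξ)) = η ⁅r ξ, r ζ⁆ - ξ ⁅r η, r ζ⁆ := by
    intro ξ η ζ
    rw [hskew]
    simp [coad, LieAlgebra.ad_apply]
    ring
  constructor
  · intro hcybe ξ η
    rw [← sub_eq_zero, ← Module.forall_dual_apply_eq_zero_iff K]
    intro ζ
    have h := hcybe ξ η ζ
    rw [map_sub, key ξ η ζ]
    have hs : η ⁅r ζ, r ξ⁆ = - η ⁅r ξ, r ζ⁆ := by rw [← lie_skew, map_neg]
    linear_combination h - hs
  · intro hrb ξ η ζ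
    have h := congrArg ζ (hrb ξ η)
    rw [key ξ η ζ] at h
    have hs : η ⁅r ζ, r ξ⁆ = - η ⁅r ξ, r ζ⁆ := by rw [← lie_skew, map_neg]
    linear_combination h + hs
end
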